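/- arXiv:2602.03474 — 5 statements merged into one kernel-verified Lean document; each statement's English description precedes it below -/
import Mathlib

section
/- Graded Byzantine Agreement validity: in the two-round unauthenticated GBA protocol with f < n/3, if all honest processors have the same input v, then every honest processor receives at least n-f votes for v, broadcasts a confirmation for v, receives at least n-f ≥ f+1 confirmations for v, and outputs (v, 1). -/
/-- Validity of the two-round unauthenticated Graded Byzantine Agreement with
`3f < n`: if all honest processors have the same input `v`, then every honest
processor receives at least `n - f` votes for `v`, receives at least
`n - f ≥ f + 1` confirmations for `v`, and outputs `(v, 1)`. -/
theorem gba_validity {α V : Type*} [DecidableEq α] [DecidableEq V]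
    (n f : ℕ) (hf : 3 * f < n)
    (Q F : Finset α) (hQ : Q.card = n) (hFQ : F ⊆ Q) (hF : F.card ≤ f)
    (input : α → V) (v : V)
    (votes : α → α → V)        -- votes q s : the vote q received from s
    (confRecv : α → α → V → Prop) [∀ q s u, Decidable (confRecv q s u)]
    (vout : α → V) (g : α → ℕ)
    -- honest processors broadcast their input as vote, received by all
    (hvotes : ∀ s ∈ Q, s ∉ F → ∀ q, votes q s = input s)
    -- an honest processor that received ≥ n - f votes for a value broadcasts a
    -- confirmation for it, received by all
    (hconf : ∀ s ∈ Q, s ∉ F → ∀ u,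
      n - f ≤ ((Q.filter (fun t => votes s t = u)).card) → ∀ q, confRecv q s u)
    -- an honest processor sets its output to a value it received a confirmation for
    (hvout : ∀ q ∈ Q, q ∉ F → ∀ u, (∃ s ∈ Q, confRecv q s u) → vout q = u)
    -- and grade 1 if it received ≥ f + 1 confirmations for that value
    (hg : ∀ q ∈ Q, q ∉ F → ∀ u,
      f + 1 ≤ (Q.filter (fun s => confRecv q s u)).card → g q = 1)
    -- all honest processors have input v
    (hin : ∀ p ∈ Q, p ∉ F → input p = v) :
    ∀ q ∈ Q, q ∉ F →
      n - f ≤ (Q.filter (fun t => votes q t = v)).card ∧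
      f + 1 ≤ (Q.filter (fun s => confRecv q s v)).card ∧
      vout q = v ∧ g q = 1 := by
  intro q hq hqF
  have key : ∀ (P : α → Prop) [DecidablePred P], (∀ s ∈ Q, s ∉ F → P s) →
      n - f ≤ (Q.filter P).card := by
    intro P _ hP
    have hsub : Q \ F ⊆ Q.filter P := by
      intro x hx
      rw [Finset.mem_sdiff] at hx
      exact Finset.mem_filter.mpr ⟨hx.1, hP x hx.1 hx.2⟩
    calc n - f ≤ Q.card - F.card := by omega
      _ = (Q \ F).card := (Finset.card_sdiff_of_subset hFQ).symm
      _ ≤ _ := Finset.card_le_card hsub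
  have hv : ∀ s ∈ Q, s ∉ F → n - f ≤ (Q.filter (fun t => votes s t = v)).card := by
    intro s hs hsF
    exact key _ (fun t ht htF => by rw [hvotes t ht htF s, hin t ht htF])
  have hcv : n - f ≤ (Q.filter (fun s => confRecv q s v)).card :=
    key _ (fun s hs hsF => hconf s hs hsF v (hv s hs hsF) q)
  have hfc : f + 1 ≤ (Q.filter (fun s => confRecv q s v)).card := by omega
  have hne : (Q.filter (fun s => confRecv q s v)).Nonempty :=
    Finset.card_pos.mp (by omega)
  obtain ⟨s, hs⟩ := hne
  rw [Finset.mem_filter] at hs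
  exact ⟨hv q hq hqF, hfc, hvout q hq hqF v ⟨s, hs.1, hs.2⟩, hg q hq hqF v hfc⟩
end

section
/- Graded Byzantine Agreement consistency: with f < n/3, if some honest processor receives at least f+1 confirmation messages for value v, then at least one confirmation came from an honest processor, and since honest broadcasts are received by all, every honest processor receives at least one confirmation for v and hence sets its output value to v. -/
/-- Consistency of GBA with `3f < n`: if some honest processor receives at
least `f + 1` confirmations for `v`, then at least one came from an honest
processor; since honest broadcasts are received by everyone, every honest
processor receives at least one confirmation for `v`. -/
theorem gba_consistency {α V : Type*} [DecidableEq α]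
    (n f : ℕ) (hf : 3 * f < n)
    (Q F : Finset α) (hQ : Q.card = n) (hFQ : F ⊆ Q) (hF : F.card ≤ f)
    (confRecv : α → α → V → Prop) [∀ q s u, Decidable (confRecv q s u)]
    -- confirmations sent by honest processors are received identically by all
    (hbroadcast : ∀ s ∈ Q, s ∉ F → ∀ (u : V) (q q' : α),
      confRecv q s u → confRecv q' s u)
    (v : V) (q₀ : α) (hq₀Q : q₀ ∈ Q) (hq₀F : q₀ ∉ F)
    -- q₀ received ≥ f + 1 confirmations for v (from distinct senders in Q)
    (hrecv : f + 1 ≤ (Q.filter (fun s => confRecv q₀ s v)).card) :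
    (∃ s ∈ Q, s ∉ F ∧ confRecv q₀ s v) ∧
    ∀ q ∈ Q, q ∉ F → ∃ s ∈ Q, confRecv q s v := by
  have hex : ∃ s ∈ Q, s ∉ F ∧ confRecv q₀ s v := by
    by_contra h
    push_neg at h
    have hsub : Q.filter (fun s => confRecv q₀ s v) ⊆ F := by
      intro s hs
      simp only [Finset.mem_filter] at hs
      by_contra hsF
      exact h s hs.1 hsF hs.2
    have := Finset.card_le_card hsub
    omega
  refine ⟨hex, ?_⟩
  obtain ⟨s, hsQ, hsF, hsc⟩ := hex
  intro q hq hqF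
  exact ⟨s, hsQ, hbroadcast s hsQ hsF v q₀ q hsc⟩
end

section
/- In the GBA protocol with f < n/3, if two honest processors broadcast confirmations for values v and v' respectively, then v = v': each saw n-f votes for its value, of which at least n-2f come from honest processors who vote for exactly one value, forcing 2(n-2f) + f ≤ n, contradicting 3f < n when v ≠ v'. -/
/-- Single confirmed value in GBA with `3f < n`: if one processor received
votes for `v` from at least `n - f` distinct senders and another received votes
for `v'` from at least `n - f` distinct senders, where each honest sender
broadcasts exactly one vote (received identically by all), then `v = v'`. -/
theorem gba_single_confirmed_value {α V : Type*} [DecidableEq α]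
    (n f : ℕ) (hf : 3 * f < n)
    (Q F : Finset α) (hQ : Q.card = n) (hFQ : F ⊆ Q) (hF : F.card ≤ f)
    (vote : α → V) (v v' : V)
    (A B : Finset α) (hAQ : A ⊆ Q) (hBQ : B ⊆ Q)
    (hA : n - f ≤ A.card) (hB : n - f ≤ B.card)
    (hAv : ∀ s ∈ A, s ∉ F → vote s = v)
    (hBv : ∀ s ∈ B, s ∉ F → vote s = v') :
    v = v' := by
  have hcup : (A ∪ B).card ≤ n := hQ ▸ Finset.card_le_card (Finset.union_subset hAQ hBQ)
  have hint : f < (A ∩ B).card := by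
    have := Finset.card_union_add_card_inter A B
    omega
  obtain ⟨s, hs, hsF⟩ : ∃ s ∈ A ∩ B, s ∉ F := by
    by_contra h
    push_neg at h
    have : (A ∩ B).card ≤ F.card := Finset.card_le_card fun x hx => h x hx
    omega
  rw [Finset.mem_inter] at hs
  rw [← hAv s hs.1 hsF, hBv s hs.2 hsF]
end

section
/- Validity of recursive crash agreement by strong induction: if an abstract protocol on set S of size m either (base case, m ≤ c) satisfies validity directly, or (recursive case) runs the protocol on the first half, has surviving first-half processors forward their output to the second half which adopts it as input (keeping its own input otherwise), and then runs the protocol on the second half — then whenever all non-crashed processors start with the same input v, all non-crashed processors output v. -/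
/-- Validity of the recursive crash agreement step: the protocol on `S₁ ∪ S₂`
runs the protocol on the first half `S₁` (whose survivors `H₁` forward their
output to the second half `S₂`, which adopts a forwarded value or keeps its own
input), then runs the protocol on `S₂`.  If both sub-calls satisfy validity
(premise over the non-faulty processors `N`, conclusion over the sub-call
survivors), then whenever all non-faulty processors start with input `v`, all
non-faulty processors output `v`. -/
theorem rca_validity {α V : Type*} [DecidableEq α]
    (S₁ S₂ H₁ H₂ N : Finset α)
    (input input₂ out₁ out₂ out : α → V)
    -- non-faulty processors survive each sub-call they participate in
    (hN₁ : N ∩ S₁ ⊆ H₁) (hN₂ : N ∩ S₂ ⊆ H₂)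
    -- validity of the first sub-call (induction hypothesis)
    (hval₁ : ∀ u : V, (∀ p ∈ S₁, p ∈ N → input p = u) → ∀ p ∈ H₁, out₁ p = u)
    -- forwarding rule: a second-half processor's new input is either some
    -- first-half survivor's output or its original input
    (hfwd : ∀ p ∈ S₂, input₂ p = input p ∨ ∃ q ∈ H₁, input₂ p = out₁ q)
    -- validity of the second sub-call (induction hypothesis)
    (hval₂ : ∀ u : V, (∀ p ∈ S₂, p ∈ N → input₂ p = u) → ∀ p ∈ H₂, out₂ p = u)
    -- outputs: first-half processors output the first sub-call's result,
    -- second-half processors the second sub-call's result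
    (hout₁ : ∀ p ∈ N ∩ S₁, out p = out₁ p)
    (hout₂ : ∀ p ∈ N ∩ S₂, out p = out₂ p)
    (v : V)
    -- all non-faulty processors start with the same input v
    (hin : ∀ p ∈ N, input p = v) :
    ∀ p ∈ N, p ∈ S₁ ∪ S₂ → out p = v := by
  have h1 : ∀ p ∈ H₁, out₁ p = v := hval₁ v (fun p _ hpN => hin p hpN)
  have h2 : ∀ p ∈ H₂, out₂ p = v := by
    refine hval₂ v (fun p hpS hpN => ?_)
    rcases hfwd p hpS with h | ⟨q, hq, h⟩
    · rw [h]; exact hin p hpN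
    · rw [h]; exact h1 q hq
  intro p hpN hpU
  rcases Finset.mem_union.mp hpU with h | h
  · rw [hout₁ p (Finset.mem_inter.mpr ⟨hpN, h⟩)]
    exact h1 p (hN₁ (Finset.mem_inter.mpr ⟨hpN, h⟩))
  · rw [hout₂ p (Finset.mem_inter.mpr ⟨hpN, h⟩)]
    exact h2 p (hN₂ (Finset.mem_inter.mpr ⟨hpN, h⟩))
end

section
/- 1-preference of the modified recursive algorithm (binary case): by strong induction on |Q_w|, if a surviving processor p receives the value 1 at any point during the execution of the modified RCA on Q_w (which includes a preliminary round where second-half processors send their inputs to the first half, and first-half processors with a received 1 overwrite their input to 1), then p outputs 1. -/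
/-- 1-preference of the modified recursive crash agreement (binary case,
`true` playing the role of `1`).  The call on `S₁ ∪ S₂` consists of:
(a) a preliminary round in which second-half processors send their inputs to
the first half, and first-half processors receiving a `1` overwrite their input
to `1`; (b) the recursive call on the first half; (c) dissemination of
first-half survivors' outputs to the second half, which adopts a received value
(else keeps its own input); (d) the recursive call on the second half.
Assuming the sub-calls satisfy 1-preference, validity and agreement (induction
hypotheses), any survivor of the call that has input `1` or receives a
1-valued message outputs `1`. -/
theorem rca_one_preference {α : Type*} [DecidableEq α]
    (S₁ S₂ H₁ H₂ H : Finset α)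
    (input input₁ input₂ out₁ out₂ out : α → Bool)
    (recvPre recvMid : α → α → Prop)   -- message receipt in rounds (a) and (c)
    (rcv1₁ rcv1₂ : α → Prop)           -- "received a 1 inside the sub-call"
    (hH1 : H ∩ S₁ ⊆ H₁) (hH2 : H ∩ S₂ ⊆ H₂)
    -- a survivor of the whole call in S₂ successfully sends its preliminary
    -- message to every first-half processor
    (hsendPre : ∀ p ∈ H, p ∈ S₂ → ∀ q ∈ S₁, recvPre q p)
    -- (a): first-half inputs after the preliminary round
    (hpre : ∀ p ∈ S₁, (input₁ p = true ↔
      (input p = true ∨ ∃ q ∈ S₂, recvPre p q ∧ input q = true)))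
    -- induction hypotheses for the first sub-call
    (hpref₁ : ∀ p ∈ H₁, rcv1₁ p → out₁ p = true)
    (hstrong₁ : (∃ p ∈ H₁, input₁ p = true) → ∀ p ∈ H₁, out₁ p = true)
    (hval₁ : (∀ p ∈ S₁, input₁ p = true) → ∀ p ∈ H₁, out₁ p = true)
    (hagr₁ : ∀ q ∈ H₁, ∀ q' ∈ H₁, out₁ q = out₁ q')
    -- (c): second-half inputs after dissemination
    (hin₂ : ∀ p ∈ S₂,
      (input₂ p = input p ∧ ∀ q ∈ H₁, ¬ recvMid p q) ∨
      (∃ q ∈ H₁, recvMid p q ∧ input₂ p = out₁ q))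
    -- induction hypotheses for the second sub-call
    (hpref₂ : ∀ p ∈ H₂, rcv1₂ p → out₂ p = true)
    (hstrong₂ : (∃ p ∈ H₂, input₂ p = true) → ∀ p ∈ H₂, out₂ p = true)
    -- (e): outputs
    (hout₁ : ∀ p ∈ H ∩ S₁, out p = out₁ p)
    (hout₂ : ∀ p ∈ H ∩ S₂, out p = out₂ p) :
    ∀ p ∈ H,
      ((p ∈ S₁ ∧ (input p = true ∨ rcv1₁ p ∨
          ∃ q ∈ S₂, recvPre p q ∧ input q = true)) ∨
       (p ∈ S₂ ∧ (input p = true ∨ rcv1₂ p ∨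
          ∃ q ∈ H₁, recvMid p q ∧ out₁ q = true))) →
      out p = true := by
  intro p hpH hcase
  rcases hcase with ⟨hpS1, hc⟩ | ⟨hpS2, hc⟩
  · have hpH1 : p ∈ H₁ := hH1 (Finset.mem_inter.mpr ⟨hpH, hpS1⟩)
    have hout : out p = out₁ p := hout₁ p (Finset.mem_inter.mpr ⟨hpH, hpS1⟩)
    rcases hc with h | h | h
    · have : input₁ p = true := (hpre p hpS1).mpr (Or.inl h)
      rw [hout]; exact hstrong₁ ⟨p, hpH1, this⟩ p hpH1
    · rw [hout]; exact hpref₁ p hpH1 h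
    · have : input₁ p = true := (hpre p hpS1).mpr (Or.inr h)
      rw [hout]; exact hstrong₁ ⟨p, hpH1, this⟩ p hpH1
  · have hpH2 : p ∈ H₂ := hH2 (Finset.mem_inter.mpr ⟨hpH, hpS2⟩)
    have hout : out p = out₂ p := hout₂ p (Finset.mem_inter.mpr ⟨hpH, hpS2⟩)
    rw [hout]
    rcases hc with h | h | ⟨q, hqH1, hrm, hoq⟩
    · -- p ∈ H ∩ S₂ with input true: all first-half inputs become true
      have hall : ∀ r ∈ S₁, input₁ r = true := fun r hr =>
        (hpre r hr).mpr (Or.inr ⟨p, hpS2, hsendPre p hpH hpS2 r hr, h⟩)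
      have hO1 : ∀ r ∈ H₁, out₁ r = true := hval₁ hall
      rcases hin₂ p hpS2 with ⟨heq, _⟩ | ⟨q, hqH1, _, heq⟩
      · exact hstrong₂ ⟨p, hpH2, heq.trans h⟩ p hpH2
      · exact hstrong₂ ⟨p, hpH2, heq.trans (hO1 q hqH1)⟩ p hpH2
    · exact hpref₂ p hpH2 h
    · rcases hin₂ p hpS2 with ⟨_, hno⟩ | ⟨q', hq'H1, _, heq⟩
      · exact absurd hrm (hno q hqH1)
      · exact hstrong₂ ⟨p, hpH2, heq.trans ((hagr₁ q' hq'H1 q hqH1).trans hoq)⟩ p hpH2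
end
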